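/- Let E be a real Hilbert space, T ≥ 1 a natural number, L ≥ 0, and f_i : E → ℝ (for i : Fin T) differentiable functions such that f = ∑_i f_i has L-Lipschitz gradient. Fix θ ∈ E, let g_i = ∇f_i(θ), and let g'_i be the orthogonal projection of g_i onto the orthogonal complement of the submodule spanned by {g_j : j ≠ i}. Then for every step size t with 0 ≤ t ≤ 2/(T·L) (when L > 0; any t ≥ 0 with t(1 - T·L·t/2) ≥ 0), f(θ - t • ∑_i g'_i) ≤ f(θ) - t (1 - (T · L · t)/2) ∑_i ‖g'_i‖² ≤ f(θ); that is, one GradOPS update never increases the total loss. -/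

import Mathlib

open scoped RealInnerProductSpace Gradient

/-- The GradOPS-modified gradient: the orthogonal projection of `g i` onto the orthogonal
complement of the submodule spanned by the other task gradients `{g j : j ≠ i}`. -/
noncomputable def gradOPSGrad {E : Type*} [NormedAddCommGroup E] [InnerProductSpace ℝ E]
    {T : ℕ} (g : Fin T → E) (i : Fin T) : E :=
  haveI : FiniteDimensional ℝ (Submodule.span ℝ (g '' {j | j ≠ i})) :=
    FiniteDimensional.span_of_finite ℝ (Set.toFinite _)
  g i - (Submodule.orthogonalProjectionOnto (Submodule.span ℝ (g '' {j | j ≠ i})) (g i) : E)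

section Aux

variable {E : Type*} [NormedAddCommGroup E] [InnerProductSpace ℝ E] [CompleteSpace E]

/-- The descent lemma. -/
lemma descent_lemma {F : E → ℝ} (hF : Differentiable ℝ F) {L : ℝ} (hL : 0 ≤ L)
    (hlip : LipschitzWith (Real.toNNReal L) (∇ F)) (x v : E) :
    F (x + v) ≤ F x + ⟪∇ F x, v⟫ + L / 2 * ‖v‖ ^ 2 := by
  set h : ℝ → ℝ := fun s => F (x + s • v) - s * ⟪∇ F x, v⟫ - L * ‖v‖ ^ 2 * s ^ 2 / 2 with hh
  have hderiv : ∀ s : ℝ,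
      HasDerivAt h (⟪∇ F (x + s • v), v⟫ - ⟪∇ F x, v⟫ - L * ‖v‖ ^ 2 * s) s := by
    intro s
    have hline : HasDerivAt (fun s : ℝ => x + s • v) v s := by
      simpa using ((hasDerivAt_id s).smul_const v).const_add x
    have h1 : HasDerivAt (fun s : ℝ => F (x + s • v)) ⟪∇ F (x + s • v), v⟫ s := by
      have hfd : HasFDerivAt F (InnerProductSpace.toDual ℝ E (∇ F (x + s • v))) (x + s • v) :=
        hasGradientAt_iff_hasFDerivAt.mp (hF (x + s • v)).hasGradientAt
      simpa [Function.comp_def] using hfd.comp_hasDerivAt s hline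
    have h2 : HasDerivAt (fun s : ℝ => s * ⟪∇ F x, v⟫) ⟪∇ F x, v⟫ s := by
      simpa using (hasDerivAt_id s).mul_const ⟪∇ F x, v⟫
    have h3 : HasDerivAt (fun s : ℝ => L * ‖v‖ ^ 2 * s ^ 2 / 2) (L * ‖v‖ ^ 2 * s) s := by
      have := ((hasDerivAt_pow 2 s).const_mul (L * ‖v‖ ^ 2)).div_const 2
      convert this using 1
      any_goals rfl
      ring
    exact (h1.sub h2).sub h3
  have hdiff : Differentiable ℝ h := fun s => (hderiv s).differentiableAt
  have hanti : AntitoneOn h (Set.Icc (0 : ℝ) 1) := by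
    apply antitoneOn_of_deriv_nonpos (convex_Icc 0 1) hdiff.continuous.continuousOn
      (hdiff.differentiableOn)
    intro s hs
    rw [interior_Icc] at hs
    rw [(hderiv s).deriv]
    have hs0 : 0 ≤ s := le_of_lt hs.1
    have hle : ⟪∇ F (x + s • v) - ∇ F x, v⟫ ≤ L * (s * ‖v‖) * ‖v‖ := by
      calc ⟪∇ F (x + s • v) - ∇ F x, v⟫ ≤ ‖∇ F (x + s • v) - ∇ F x‖ * ‖v‖ :=
            real_inner_le_norm _ _
        _ ≤ L * (s * ‖v‖) * ‖v‖ := by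
            apply mul_le_mul_of_nonneg_right _ (norm_nonneg v)
            have := hlip.dist_le_mul (x + s • v) x
            rw [Real.coe_toNNReal L hL, dist_eq_norm, dist_eq_norm] at this
            simpa [norm_smul, abs_of_nonneg hs0, mul_assoc] using this
    rw [inner_sub_left] at hle
    nlinarith [norm_nonneg v, sq_nonneg ‖v‖]
  have := hanti (Set.left_mem_Icc.mpr zero_le_one) (Set.right_mem_Icc.mpr zero_le_one) zero_le_one
  simp only [hh, one_smul, zero_smul, add_zero, one_pow, zero_pow, one_mul, zero_mul,
    mul_zero, sub_zero, zero_div] at this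
  linarith

lemma gradient_sum' {ι : Type*} (s : Finset ι) (f : ι → E → ℝ)
    (hf : ∀ i, Differentiable ℝ (f i)) (x : E) :
    ∇ (fun y => ∑ i ∈ s, f i y) x = ∑ i ∈ s, ∇ (f i) x := by
  have : HasGradientAt (fun y => ∑ i ∈ s, f i y) (∑ i ∈ s, ∇ (f i) x) x := by
    rw [hasGradientAt_iff_hasFDerivAt, map_sum]
    exact HasFDerivAt.fun_sum fun i _ => hasGradientAt_iff_hasFDerivAt.mp (hf i x).hasGradientAt
  exact this.gradient

lemma gradOPS_mem_orthogonal {T : ℕ} (g : Fin T → E) (i : Fin T) :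
    haveI : FiniteDimensional ℝ (Submodule.span ℝ (g '' {j | j ≠ i})) :=
      FiniteDimensional.span_of_finite ℝ (Set.toFinite _)
    gradOPSGrad g i ∈ (Submodule.span ℝ (g '' {j | j ≠ i}))ᗮ := by
  haveI : FiniteDimensional ℝ (Submodule.span ℝ (g '' {j | j ≠ i})) :=
    FiniteDimensional.span_of_finite ℝ (Set.toFinite _)
  exact Submodule.sub_starProjection_mem_orthogonal (g i)

lemma gradOPS_inner_ne {T : ℕ} (g : Fin T → E) {i j : Fin T} (hj : j ≠ i) :
    ⟪gradOPSGrad g i, g j⟫ = 0 := by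
  haveI : FiniteDimensional ℝ (Submodule.span ℝ (g '' {j | j ≠ i})) :=
    FiniteDimensional.span_of_finite ℝ (Set.toFinite _)
  have hmem := gradOPS_mem_orthogonal g i
  have hgj : g j ∈ Submodule.span ℝ (g '' {j | j ≠ i}) :=
    Submodule.subset_span (Set.mem_image_of_mem g hj)
  rw [real_inner_comm]
  exact (Submodule.mem_orthogonal _ _).mp hmem (g j) hgj

lemma gradOPS_inner_self {T : ℕ} (g : Fin T → E) (i : Fin T) :
    ⟪gradOPSGrad g i, g i⟫ = ‖gradOPSGrad g i‖ ^ 2 := by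
  haveI : FiniteDimensional ℝ (Submodule.span ℝ (g '' {j | j ≠ i})) :=
    FiniteDimensional.span_of_finite ℝ (Set.toFinite _)
  have hmem := gradOPS_mem_orthogonal g i
  have hp : (Submodule.orthogonalProjectionOnto (Submodule.span ℝ (g '' {j | j ≠ i})) (g i) : E) ∈
      Submodule.span ℝ (g '' {j | j ≠ i}) := Submodule.coe_mem _
  have h0 : ⟪gradOPSGrad g i,
      (Submodule.orthogonalProjectionOnto (Submodule.span ℝ (g '' {j | j ≠ i})) (g i) : E)⟫ = 0 := by
    rw [real_inner_comm]
    exact (Submodule.mem_orthogonal _ _).mp hmem _ hp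
  have hdecomp : g i = gradOPSGrad g i +
      (Submodule.orthogonalProjectionOnto (Submodule.span ℝ (g '' {j | j ≠ i})) (g i) : E) := by
    simp [gradOPSGrad]
  calc ⟪gradOPSGrad g i, g i⟫
      = ⟪gradOPSGrad g i, gradOPSGrad g i⟫ + ⟪gradOPSGrad g i,
        (Submodule.orthogonalProjectionOnto (Submodule.span ℝ (g '' {j | j ≠ i})) (g i) : E)⟫ := by
        rw [← inner_add_right, ← hdecomp]
    _ = ‖gradOPSGrad g i‖ ^ 2 := by rw [h0, add_zero, real_inner_self_eq_norm_sq]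

end Aux

theorem stmt14 {E : Type*} [NormedAddCommGroup E] [InnerProductSpace ℝ E] [CompleteSpace E]
    {T : ℕ} (hT : 1 ≤ T) (L : ℝ) (hL : 0 ≤ L)
    (f : Fin T → E → ℝ) (hf : ∀ i, Differentiable ℝ (f i))
    (hlip : LipschitzWith (Real.toNNReal L) (∇ (fun x => ∑ i, f i x)))
    (θ : E) (t : ℝ) (ht0 : 0 ≤ t) (ht : 0 ≤ t * (1 - (T * L * t) / 2)) :
    (∑ i, f i (θ - t • ∑ i, gradOPSGrad (fun j => ∇ (f j) θ) i)) ≤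
        (∑ i, f i θ) - t * (1 - (T * L * t) / 2) *
          ∑ i, ‖gradOPSGrad (fun j => ∇ (f j) θ) i‖ ^ 2 ∧
      (∑ i, f i θ) - t * (1 - (T * L * t) / 2) *
          ∑ i, ‖gradOPSGrad (fun j => ∇ (f j) θ) i‖ ^ 2 ≤ ∑ i, f i θ := by
  set g : Fin T → E := fun j => ∇ (f j) θ with hg
  set g' : Fin T → E := fun i => gradOPSGrad g i with hg'
  set d : E := ∑ i, g' i with hd
  set Ssq : ℝ := ∑ i, ‖g' i‖ ^ 2 with hSsq
  set F : E → ℝ := fun x => ∑ i, f i x with hF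
  have hFdiff : Differentiable ℝ F := Differentiable.fun_sum fun i _ => hf i
  have hSsqnn : 0 ≤ Ssq := Finset.sum_nonneg fun i _ => sq_nonneg _
  -- gradient of the sum
  have hgradF : ∇ F θ = ∑ i, g i := gradient_sum' Finset.univ f hf θ
  -- inner product identity
  have hinner : ⟪∇ F θ, d⟫ = Ssq := by
    rw [hgradF, hd, inner_sum]
    have : ∀ i : Fin T, ⟪∑ j, g j, g' i⟫ = ‖g' i‖ ^ 2 := by
      intro i
      rw [sum_inner]
      have : ∀ j : Fin T, ⟪g j, g' i⟫ = if j = i then ‖g' i‖ ^ 2 else 0 := by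
        intro j
        by_cases hji : j = i
        · subst hji
          simp only [if_pos rfl]
          rw [real_inner_comm]; exact gradOPS_inner_self g j
        · simp only [hji, if_false]
          rw [real_inner_comm]; exact gradOPS_inner_ne g hji
      simp [this]
    simp [this, hSsq]
  -- norm bound
  have hnormd : ‖d‖ ^ 2 ≤ T * Ssq := by
    calc ‖d‖ ^ 2 ≤ (∑ i, ‖g' i‖) ^ 2 := by
          apply pow_le_pow_left₀ (norm_nonneg _) (norm_sum_le _ _)
      _ ≤ (T : ℝ) * ∑ i : Fin T, ‖g' i‖ ^ 2 := by
          have h := sq_sum_le_card_mul_sum_sq (s := (Finset.univ : Finset (Fin T)))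
            (f := fun i => ‖g' i‖)
          simpa using h
      _ = T * Ssq := by rw [hSsq]
  -- descent lemma applied with v = -(t • d)
  have hdesc := descent_lemma hFdiff hL hlip θ (-(t • d))
  rw [← sub_eq_add_neg] at hdesc
  have hin : ⟪∇ F θ, -(t • d)⟫ = -(t * Ssq) := by
    rw [inner_neg_right, real_inner_smul_right, hinner]
  have hnv : ‖-(t • d)‖ ^ 2 = t ^ 2 * ‖d‖ ^ 2 := by
    rw [norm_neg, norm_smul]
    simp [abs_of_nonneg ht0, mul_pow]
  rw [hin, hnv] at hdesc
  have hkey : F (θ - t • d) ≤ F θ - t * (1 - (T * L * t) / 2) * Ssq := by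
    have h5 : L / 2 * (t ^ 2 * ‖d‖ ^ 2) ≤ L / 2 * (t ^ 2 * (T * Ssq)) := by
      apply mul_le_mul_of_nonneg_left _ (by linarith)
      exact mul_le_mul_of_nonneg_left hnormd (sq_nonneg t)
    have hexp : F θ - t * (1 - (T * L * t) / 2) * Ssq
        = F θ + -(t * Ssq) + L / 2 * (t ^ 2 * ((T : ℝ) * Ssq)) := by ring
    rw [hexp]
    calc F (θ - t • d) ≤ F θ + -(t * Ssq) + L / 2 * (t ^ 2 * ‖d‖ ^ 2) := by linarith
      _ ≤ F θ + -(t * Ssq) + L / 2 * (t ^ 2 * ((T : ℝ) * Ssq)) := by linarith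
  refine ⟨hkey, ?_⟩
  have : 0 ≤ t * (1 - (T * L * t) / 2) * Ssq := mul_nonneg ht hSsqnn
  linarith
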